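/- Let G be a temporal graph, k ≥ 1 an integer, and [ts,te] a window. Suppose that (i) there exists a temporal edge e with a minimal core window [t1,t2] satisfying ts ≤ t1, t2 = te, and such that e has no minimal core window [t1',t2'] with ts ≤ t1' < t1; and (ii) there exists a temporal edge with a minimal core window [a,b] satisfying a = ts and b ≤ te. Then C_[ts,te] is nonempty and TTI(C_[ts,te]) = [ts,te]. -/

import Mathlib

variable {V : Type*} [Fintype V]

/-- A vertex set `S` is `k`-dense in `G` if every vertex of `S` has
at least `k` neighbors of `G` lying in `S`. -/
def KDense (G : SimpleGraph V) (k : ℕ) (S : Set V) : Prop :=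
  ∀ v ∈ S, k ≤ (S ∩ G.neighborSet v).ncard

/-- The `k`-core of `G`: the union of all `k`-dense vertex sets. -/
def kCore (G : SimpleGraph V) (k : ℕ) : Set V :=
  ⋃₀ {S | KDense G k S}

/-- A temporal graph on a vertex set `V`: a finite set of temporal edges
`(u, v, t)` with `u ≠ v` and integer timestamp `t`. -/
structure TemporalGraph (V : Type*) where
  E : Finset (V × V × ℤ)
  ne : ∀ e ∈ E, e.1 ≠ e.2.1

/-- The projected (snapshot) graph of `G` over the time window `[ts, te]`. -/
def TemporalGraph.proj (G : TemporalGraph V) (ts te : ℤ) : SimpleGraph V where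
  Adj u v := ∃ t, ts ≤ t ∧ t ≤ te ∧ ((u, v, t) ∈ G.E ∨ (v, u, t) ∈ G.E)
  symm := by
    constructor
    rintro u v ⟨t, h1, h2, h3⟩
    exact ⟨t, h1, h2, h3.symm⟩
  loopless := by
    constructor
    rintro u ⟨t, h1, h2, h3⟩
    rcases h3 with h | h <;> exact G.ne _ h rfl

/-- The temporal `k`-core of the window `[ts, te]`: all temporal edges with
timestamp in `[ts, te]` whose both endpoints lie in the `k`-core of the
projected graph `G_[ts,te]`. -/
def TemporalGraph.tCore (G : TemporalGraph V) (k : ℕ) (ts te : ℤ) :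
    Set (V × V × ℤ) :=
  {e | e ∈ G.E ∧ ts ≤ e.2.2 ∧ e.2.2 ≤ te ∧
    e.1 ∈ kCore (G.proj ts te) k ∧ e.2.1 ∈ kCore (G.proj ts te) k}

/-- `[t1, t2]` is a minimal core window of the temporal edge `e`:
`e` lies in the temporal `k`-core of `[t1, t2]` but in no temporal `k`-core
of a window properly contained in `[t1, t2]`. -/
def MinCoreWindow (G : TemporalGraph V) (k : ℕ) (e : V × V × ℤ)
    (t1 t2 : ℤ) : Prop :=
  e ∈ G.tCore k t1 t2 ∧
  ∀ ts' te', t1 ≤ ts' → te' ≤ t2 → (ts', te') ≠ (t1, t2) →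
    e ∉ G.tCore k ts' te'

/-- `[a, b]` is the tightest time interval of the edge set `C`:
`a` and `b` are the minimum and maximum timestamps of the edges in `C`. -/
def IsTTI (C : Set (V × V × ℤ)) (a b : ℤ) : Prop :=
  IsLeast {t | ∃ e ∈ C, e.2.2 = t} a ∧ IsGreatest {t | ∃ e ∈ C, e.2.2 = t} b


/-!
If `[a, b]` is a minimal core window of some edge, then the temporal core of `[a, b]` contains
edges stamped `a` and `b`: otherwise all its timestamps lie in `[a + 1, b]` (or `[a, b - 1]`),
the `k`-core of `G_[a,b]` stays `k`-dense in the projection of that smaller window, and the edge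
would already lie in its temporal core. Hypothesis (ii) supplies an edge stamped `ts` in
`C_[ts,b] ⊆ C_[ts,te]`, hypothesis (i) an edge stamped `te` in `C_[t1,te] ⊆ C_[ts,te]`.
-/

theorem kCore_kDense (G : SimpleGraph V) (k : ℕ) : KDense G k (kCore G k) := by
  rintro v ⟨S, hS, hvS⟩
  exact (hS v hvS).trans <| Set.ncard_le_ncard
    (Set.inter_subset_inter_left _ (Set.subset_sUnion_of_mem hS)) (Set.toFinite _)

theorem kCore_mono {G H : SimpleGraph V} (h : G ≤ H) (k : ℕ) : kCore G k ⊆ kCore H k := by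
  rintro v ⟨S, hS, hvS⟩
  have hSH : KDense H k S := fun w hw => (hS w hw).trans <|
    Set.ncard_le_ncard (Set.inter_subset_inter_right _ fun _ hx => h hx) (Set.toFinite _)
  exact Set.subset_sUnion_of_mem hSH hvS

namespace TemporalGraph

theorem tCore_mono (G : TemporalGraph V) (k : ℕ) {ts te ts' te' : ℤ} (hs : ts ≤ ts')
    (he : te' ≤ te) : G.tCore k ts' te' ⊆ G.tCore k ts te := by
  have hproj : G.proj ts' te' ≤ G.proj ts te := by
    rintro u v ⟨t, hts, hte, hE⟩
    exact ⟨t, hs.trans hts, hte.trans he, hE⟩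
  rintro e ⟨hE, hts, hte, hu, hv⟩
  exact ⟨hE, hs.trans hts, hte.trans he, kCore_mono hproj k hu, kCore_mono hproj k hv⟩

theorem tCore_subset_tCore_of_timestamps (G : TemporalGraph V) (k : ℕ) {a b a' b' : ℤ}
    (h : ∀ e ∈ G.tCore k a b, a' ≤ e.2.2 ∧ e.2.2 ≤ b') :
    G.tCore k a b ⊆ G.tCore k a' b' := by
  have hdense : KDense (G.proj a' b') k (kCore (G.proj a b) k) := by
    intro v hv
    refine (kCore_kDense _ k v hv).trans (Set.ncard_le_ncard ?_ (Set.toFinite _))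
    rintro w ⟨hw, t, hta, htb, hE⟩
    have ht : a' ≤ t ∧ t ≤ b' := by
      rcases hE with hE | hE
      · exact h (v, w, t) ⟨hE, hta, htb, hv, hw⟩
      · exact h (w, v, t) ⟨hE, hta, htb, hw, hv⟩
    exact ⟨hw, t, ht.1, ht.2, hE⟩
  intro e he
  exact ⟨he.1, (h e he).1, (h e he).2,
    Set.subset_sUnion_of_mem hdense he.2.2.2.1, Set.subset_sUnion_of_mem hdense he.2.2.2.2⟩

end TemporalGraph

namespace MinCoreWindow

variable {G : TemporalGraph V} {k : ℕ} {e : V × V × ℤ} {a b : ℤ}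

theorem exists_mem_tCore_timestamp_eq_left (h : MinCoreWindow G k e a b) :
    ∃ g ∈ G.tCore k a b, g.2.2 = a := by
  by_contra! hne
  have hsub : G.tCore k a b ⊆ G.tCore k (a + 1) b :=
    G.tCore_subset_tCore_of_timestamps k fun g hg =>
      ⟨lt_of_le_of_ne hg.2.1 (hne g hg).symm, hg.2.2.1⟩
  exact h.2 (a + 1) b (by omega) le_rfl (by simp) (hsub h.1)

theorem exists_mem_tCore_timestamp_eq_right (h : MinCoreWindow G k e a b) :
    ∃ g ∈ G.tCore k a b, g.2.2 = b := by
  by_contra! hne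
  have hsub : G.tCore k a b ⊆ G.tCore k a (b - 1) :=
    G.tCore_subset_tCore_of_timestamps k fun g hg =>
      ⟨hg.2.1, Int.le_sub_one_of_lt (lt_of_le_of_ne hg.2.2.1 (hne g hg))⟩
  exact h.2 a (b - 1) le_rfl (by omega) (by simp) (hsub h.1)

end MinCoreWindow

theorem valid_end_time_sufficient_general (G : TemporalGraph V) (k : ℕ)
    (ts te : ℤ)
    (h1 : ∃ (e : V × V × ℤ) (t1 : ℤ), MinCoreWindow G k e t1 te ∧ ts ≤ t1 ∧
      ∀ t1' t2', MinCoreWindow G k e t1' t2' → ts ≤ t1' → ¬ t1' < t1)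
    (h2 : ∃ (e : V × V × ℤ) (b : ℤ), MinCoreWindow G k e ts b ∧ b ≤ te) :
    (G.tCore k ts te).Nonempty ∧ IsTTI (G.tCore k ts te) ts te := by
  obtain ⟨e, t1, he, ht1, -⟩ := h1
  obtain ⟨f, b, hf, hb⟩ := h2
  obtain ⟨gs, hgs, hgs_ts⟩ := hf.exists_mem_tCore_timestamp_eq_left
  obtain ⟨ge, hge, hge_te⟩ := he.exists_mem_tCore_timestamp_eq_right
  have hgs' := G.tCore_mono k le_rfl hb hgs
  have hge' := G.tCore_mono k ht1 le_rfl hge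
  refine ⟨⟨gs, hgs'⟩, ⟨⟨gs, hgs', hgs_ts⟩, ?_⟩, ⟨⟨ge, hge', hge_te⟩, ?_⟩⟩
  · rintro _ ⟨g, hg, rfl⟩
    exact hg.2.1
  · rintro _ ⟨g, hg, rfl⟩
    exact hg.2.2.1

theorem valid_end_time_sufficient (G : TemporalGraph V) (k : ℕ) (hk : 1 ≤ k)
    (ts te : ℤ) (hw : ts ≤ te)
    (h1 : ∃ (e : V × V × ℤ) (t1 : ℤ), MinCoreWindow G k e t1 te ∧ ts ≤ t1 ∧
      ∀ t1' t2', MinCoreWindow G k e t1' t2' → ts ≤ t1' → ¬ t1' < t1)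
    (h2 : ∃ (e : V × V × ℤ) (b : ℤ), MinCoreWindow G k e ts b ∧ b ≤ te) :
    (G.tCore k ts te).Nonempty ∧ IsTTI (G.tCore k ts te) ts te :=
  valid_end_time_sufficient_general G k ts te h1 h2
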